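/- arXiv:0806.3941 — 4 statements merged into one kernel-verified Lean document; each statement's English description precedes it below -/
import Mathlib

section
/- For positive integers n and r, the sum over all sequences a in {1,...,n}^r of q^{imaj(w_a)} equals the sum over l from 1 to n of S(r,l)·[n][n-1]···[n-l+1], where S(r,l) is the Stirling number of the second kind and [i] = 1 + q + ... + q^{i-1}. -/
open Finset

/-- Stirling numbers of the second kind: `stirling r l` counts set partitions of an
`r`-element set into `l` nonempty blocks. -/
def stirling : ℕ → ℕ → ℕ
  | 0, 0 => 1
  | 0, _ + 1 => 0
  | _ + 1, 0 => 0
  | r + 1, l + 1 => (l + 1) * stirling r (l + 1) + stirling r l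

/-- The `r`-th Bell number. -/
def bell (r : ℕ) : ℕ := ∑ l ∈ Finset.range (r + 1), stirling r l

/-- The q-integer `[i] = 1 + q + ... + q^(i-1)`. -/
def qint {R : Type*} [Semiring R] (q : R) (i : ℕ) : R := ∑ j ∈ Finset.range i, q ^ j

/-- The polynomial `d_{n,r}(q) = Σ_{l=1}^n S(r,l)·[n][n-1]···[n-l+1]`. -/
def dnr {R : Type*} [CommSemiring R] (n r : ℕ) (q : R) : R :=
  ∑ l ∈ Finset.Icc 1 n, (stirling r l : R) * ∏ j ∈ Finset.range l, qint q (n - j)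

/-- The one-line notation of the permutation `w_a`: start with the word `(1,2,...,n)` and,
for each letter of `a` in turn, move it to the rightmost position.  This produces the
rightmost occurrences of each value in the word `(1,...,n,a_1,...,a_r)`. -/
def waList (n : ℕ) (a : List ℕ) : List ℕ :=
  a.foldl (fun l x => l.erase x ++ [x]) (List.range' 1 n)

/-- The word associated with a sequence `a ∈ {1,...,n}^r` (values shifted to `1,...,n`). -/
def waWord {n r : ℕ} (a : Fin r → Fin n) : List ℕ := List.ofFn fun i => (a i : ℕ) + 1

/-- The inverse major index of a one-line word `l` with values `1,...,n`:
the sum of all `i` such that `i+1` occurs to the left of `i` (the backsteps). -/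
def imajList (n : ℕ) (l : List ℕ) : ℕ :=
  ∑ i ∈ Finset.Icc 1 (n - 1), if l.idxOf (i + 1) < l.idxOf i then i else 0

/-- The number of inversions of a permutation. -/
def invPerm {n : ℕ} (w : Equiv.Perm (Fin n)) : ℕ :=
  ((Finset.univ : Finset (Fin n × Fin n)).filter fun p => p.1 < p.2 ∧ w p.2 < w p.1).card

/-- The descent set of the one-line notation of `w` (zero-based positions). -/
def desSet {n : ℕ} (w : Equiv.Perm (Fin n)) : Finset ℕ :=
  (Finset.range (n - 1)).filter fun i =>
    ∃ h : i + 1 < n, w ⟨i + 1, h⟩ < w ⟨i, Nat.lt_of_succ_lt h⟩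

/-- The backstep set of `w` (zero-based values): `i` such that the value `i+1` appears to
the left of the value `i` in one-line notation, i.e. its position `w⁻¹ (i+1)` is smaller. -/
def bsSet {n : ℕ} (w : Equiv.Perm (Fin n)) : Finset ℕ :=
  (Finset.range (n - 1)).filter fun i =>
    ∃ h : i + 1 < n, w.symm ⟨i + 1, h⟩ < w.symm ⟨i, Nat.lt_of_succ_lt h⟩

/-- The set partition (as a finset of blocks) underlying a sequence `m`: `i ~ j` iff `m i = m j`. -/
def shapeFn {r : ℕ} {α : Type*} [DecidableEq α] (m : Fin r → α) : Finset (Finset (Fin r)) :=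
  (Finset.univ.image m).image fun v => Finset.univ.filter fun i => m i = v

/-- `K` is a set partition of `{1,...,r}`: blocks are nonempty and every element lies in a
unique block. -/
def isSetPartition {r : ℕ} (K : Finset (Finset (Fin r))) : Prop :=
  (∀ B ∈ K, B.Nonempty) ∧ ∀ i : Fin r, ∃! B, B ∈ K ∧ i ∈ B

instance {r : ℕ} : DecidablePred (isSetPartition (r := r)) := fun K => by
  unfold isSetPartition ExistsUnique; infer_instance

/-- Auxiliary computation of the ⋆-height: `m` records `1 + max` of the ⋆-heights so far. -/
def starAux : ℕ → List ℕ → List ℕ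
  | _, [] => []
  | m, k :: ks => min k m :: starAux (max m (min k m + 1)) ks

/-- The ⋆-height `k*` of a sequence `k ∈ Z_n^r`: `k_1* = 0` and
`k_j* = min(k_j, max(k_1*+1, ..., k_{j-1}*+1))`. -/
def starFn {n r : ℕ} (k : Fin r → Fin n) : Fin r → ℕ :=
  fun j => (starAux 0 (List.ofFn fun i => (k i : ℕ))).getD j 0

/-- `k_j - k_j*`, the number of free entries in column `j` of a `q`-set partition. -/
def qSetDiff {n r : ℕ} (k : Fin r → Fin n) (j : Fin r) : ℕ := (k j : ℕ) - starFn k j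

/-- The root subgroup element `x_{ij}(a)`: identity matrix plus `a` in position `(i,j)`. -/
def xelt {F : Type*} [Field F] {n : ℕ} (i j : Fin n) (a : F) : Matrix (Fin n) (Fin n) F :=
  1 + Matrix.single i j a

/-- The permutation matrix of `w`, with entry `1` in positions `(w l, l)`. -/
def permMat {F : Type*} [Field F] {n : ℕ} (w : Equiv.Perm (Fin n)) : Matrix (Fin n) (Fin n) F :=
  Matrix.of fun k l => if k = w l then 1 else 0

/-!
The word `w_a` lists the letters missing from `a` in increasing order, followed by the distinct
letters of `a` ordered by their last occurrence, which is `a.dedup`. So `imaj(w_a)` only depends on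
the arrangement `V = a.dedup`, and the sum splits over arrangements. Exactly `S(r, l)` sequences
have a given `V` of length `l` (classify by the first letter and whether it recurs), and the
generating function of `imaj` over arrangements of length `l` is `[n][n-1]⋯[n-l+1]`: insert the
largest letter into an arrangement of the smaller letters and keep track of its position.
-/

section QAnalogues

variable {R : Type*} [CommRing R] (q : R)

theorem qint_add (a b : ℕ) : qint q (a + b) = qint q a + q ^ a * qint q b := by
  simp only [qint, sum_range_add, mul_sum, pow_add]

def qDescFactorial (n l : ℕ) : R := ∏ j ∈ range l, qint q (n - j)

@[simp] theorem qDescFactorial_zero_right (n : ℕ) : qDescFactorial q n 0 = 1 := by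
  simp [qDescFactorial]

theorem qDescFactorial_succ_right (n l : ℕ) :
    qDescFactorial q n (l + 1) = qDescFactorial q n l * qint q (n - l) :=
  prod_range_succ _ _

theorem qDescFactorial_succ_succ (n l : ℕ) :
    qDescFactorial q (n + 1) (l + 1) = qint q (n + 1) * qDescFactorial q n l := by
  simp [qDescFactorial, prod_range_succ', mul_comm]

theorem qDescFactorial_eq_zero_of_lt {n l : ℕ} (h : n < l) : qDescFactorial q n l = 0 :=
  prod_eq_zero (mem_range.2 h) (by simp [qint])

theorem sum_range_ite_mul_pow (c : R) (a b : ℕ) :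
    ∑ s ∈ range (a + b), (if a ≤ s then c else 1) * q ^ (a + b - 1 - s) =
      q ^ b * qint q a + c * qint q b := by
  rw [sum_range_add, qint, qint, mul_sum, mul_sum, ← sum_range_reflect _ a,
    ← sum_range_reflect _ b]
  congr 1 <;> refine sum_congr rfl fun s hs => ?_
  all_goals have hs := mem_range.1 hs
  · rw [if_neg (by omega), one_mul, ← pow_add]
    congr 1
    omega
  · rw [if_pos (by omega)]
    congr 2
    omega

theorem qDescFactorial_recursion {m l t : ℕ} (ht : t ≤ l + 1) :
    q ^ (l + 1) * qDescFactorial q m (l + 1) +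
        (q ^ (l + 1 - t) * qint q t + q ^ (m + 1) * qint q (l + 1 - t)) * qDescFactorial q m l =
      q ^ (l + 1 - t) * qDescFactorial q (m + 1) (l + 1) := by
  rw [qDescFactorial_succ_right, qDescFactorial_succ_succ]
  rcases lt_or_ge m l with hml | hlm
  · simp [qDescFactorial_eq_zero_of_lt q hml]
  obtain ⟨b, hb⟩ : ∃ b, l + 1 = t + b := ⟨l + 1 - t, by omega⟩
  obtain ⟨c, hc⟩ : ∃ c, m = l + c := ⟨m - l, by omega⟩
  have hsplit : qint q (m + 1) = qint q t + q ^ t * (qint q c + q ^ c * qint q b) := by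
    rw [← qint_add, ← qint_add]
    congr 1
    omega
  rw [hsplit, show m - l = c by omega, show l + 1 - t = b by omega, hb,
    show m + 1 = t + c + b by omega]
  ring

end QAnalogues

namespace List

variable {α : Type*} [DecidableEq α] {x a b : α} {t : ℕ} {W : List α}

theorem idxOf_insertIdx_of_ne (hax : a ≠ x) (ht : t ≤ W.length) :
    (W.insertIdx t x).idxOf a = W.idxOf a + if t ≤ W.idxOf a then 1 else 0 := by
  induction W generalizing t with
  | nil =>
    obtain rfl : t = 0 := by simpa using ht
    simp [idxOf_cons_ne _ (Ne.symm hax)]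
  | cons w W ih =>
    cases t with
    | zero => simp [idxOf_cons_ne _ (Ne.symm hax)]
    | succ t =>
      rw [insertIdx_succ_cons]
      by_cases hwa : w = a
      · simp [hwa]
      · rw [idxOf_cons_ne _ hwa, idxOf_cons_ne _ hwa, ih (by simpa using ht)]
        split_ifs <;> omega

theorem idxOf_insertIdx_self (hx : x ∉ W) (ht : t ≤ W.length) :
    (W.insertIdx t x).idxOf x = t := by
  induction W generalizing t with
  | nil =>
    obtain rfl : t = 0 := by simpa using ht
    simp
  | cons w W ih =>
    cases t with
    | zero => simp
    | succ t =>
      rw [insertIdx_succ_cons, idxOf_cons_ne _ (by rintro rfl; simp at hx),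
        ih (fun h => hx (mem_cons_of_mem w h)) (by simpa using ht)]

theorem idxOf_insertIdx_lt_iff (hax : a ≠ x) (hbx : b ≠ x) (ht : t ≤ W.length) :
    (W.insertIdx t x).idxOf a < (W.insertIdx t x).idxOf b ↔ W.idxOf a < W.idxOf b := by
  rw [idxOf_insertIdx_of_ne hax ht, idxOf_insertIdx_of_ne hbx ht]
  split_ifs <;> omega

theorem erase_insertIdx_of_notMem (hx : x ∉ W) (ht : t ≤ W.length) :
    (W.insertIdx t x).erase x = W := by
  rw [erase_eq_eraseIdx_of_idxOf (idxOf_insertIdx_self hx ht), eraseIdx_insertIdx_self]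

theorem insertIdx_idxOf_erase (hx : x ∈ W) : (W.erase x).insertIdx (W.idxOf x) x = W := by
  have hlt := idxOf_lt_length_of_mem hx
  conv_rhs => rw [← insertIdx_eraseIdx_getElem hlt]
  rw [erase_eq_eraseIdx_of_idxOf rfl, getElem_idxOf hlt]

theorem dedup_cons_eq_iff {l V : List α} (hV : V.Nodup) :
    (a :: l).dedup = V ↔ (a ∈ V ∧ l.dedup = V) ∨ V = a :: l.dedup := by
  by_cases ha : a ∈ l
  · rw [dedup_cons_of_mem ha]
    constructor
    · rintro rfl
      exact Or.inl ⟨mem_dedup.2 ha, rfl⟩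
    · rintro (⟨-, h⟩ | rfl)
      · exact h
      · exact absurd (mem_dedup.2 ha) (nodup_cons.1 hV).1
  · rw [dedup_cons_of_notMem ha]
    constructor
    · rintro rfl
      exact Or.inr rfl
    · rintro (⟨haV, rfl⟩ | rfl)
      · exact absurd (mem_dedup.1 haV) ha
      · rfl

theorem foldl_erase_append_singleton {L : List α} (hL : L.Nodup) (w : List α) :
    w.foldl (fun l x => l.erase x ++ [x]) L = L.filter (· ∉ w.dedup) ++ w.dedup := by
  induction w generalizing L with
  | nil => simp
  | cons x w ih =>
    have hL' : (L.erase x ++ [x]).Nodup :=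
      (perm_append_singleton _ _).nodup_iff.2 (nodup_cons.2 ⟨hL.not_mem_erase, hL.erase x⟩)
    have hfilter : L.filter (fun a => decide (a ∉ w.dedup) && a != x) =
        L.filter (· ∉ (x :: w).dedup) :=
      filter_congr fun a _ => by by_cases a = x <;> simp [*]
    rw [foldl_cons, ih hL', filter_append, hL.erase_eq_filter, filter_filter, hfilter,
      append_assoc]
    by_cases hx : x ∈ w
    · simp [dedup_cons_of_mem hx, hx]
    · simp [dedup_cons_of_notMem hx, hx]

theorem SortedLT.idxOf_lt_idxOf_iff {β : Type*} [LinearOrder β] {l : List β} (hl : l.SortedLT)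
    {a b : β} (ha : a ∈ l) (hb : b ∈ l) : l.idxOf a < l.idxOf b ↔ a < b := by
  have hia := idxOf_lt_length_of_mem ha
  have hib := idxOf_lt_length_of_mem hb
  rw [← hl.getElem_lt_getElem_iff (hi := hia) (hj := hib), getElem_idxOf, getElem_idxOf]

end List

def IsArrangement (n : ℕ) (V : List ℕ) : Prop := V.Nodup ∧ ∀ x ∈ V, 1 ≤ x ∧ x ≤ n

def arrangements (n l : ℕ) : Finset (List ℕ) :=
  (((List.range' 1 n).sublistsLen l).flatMap List.permutations).toFinset

theorem isArrangement_iff_subperm {n : ℕ} {V : List ℕ} :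
    IsArrangement n V ↔ V.Subperm (List.range' 1 n) := by
  refine ⟨fun h => h.1.subperm fun x hx => ?_, fun h => ⟨?_, fun x hx => ?_⟩⟩
  · have := h.2 x hx
    simp only [List.mem_range'_1]
    omega
  · obtain ⟨s, hs, hsub⟩ := h
    exact hs.nodup_iff.1 (hsub.nodup List.nodup_range')
  · have := List.mem_range'_1.1 (h.subset hx)
    omega

theorem mem_arrangements {n l : ℕ} {V : List ℕ} :
    V ∈ arrangements n l ↔ IsArrangement n V ∧ V.length = l := by
  simp only [arrangements, List.mem_toFinset, List.mem_flatMap, List.mem_sublistsLen,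
    List.mem_permutations, isArrangement_iff_subperm]
  constructor
  · rintro ⟨s, ⟨hs, rfl⟩, hVs⟩
    exact ⟨⟨s, hVs.symm, hs⟩, hVs.length_eq⟩
  · rintro ⟨⟨s, hsV, hs⟩, rfl⟩
    exact ⟨s, ⟨hs, hsV.length_eq⟩, hsV.symm⟩

namespace IsArrangement

variable {m n t : ℕ} {V : List ℕ}

theorem length_le (h : IsArrangement n V) : V.length ≤ n := by
  simpa using (isArrangement_iff_subperm.1 h).length_le

theorem succ_notMem (h : IsArrangement n V) : n + 1 ∉ V := fun hn => by
  have := h.2 _ hn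
  omega

theorem insertIdx_succ (h : IsArrangement m V) (ht : t ≤ V.length) :
    IsArrangement (m + 1) (V.insertIdx t (m + 1)) := by
  refine ⟨(List.perm_insertIdx _ _ ht).nodup_iff.2 (List.nodup_cons.2 ⟨h.succ_notMem, h.1⟩),
    fun x hx => ?_⟩
  rcases (List.mem_insertIdx ht).1 hx with rfl | hx
  · omega
  · have := h.2 x hx
    omega

theorem erase_succ (h : IsArrangement (m + 1) V) : IsArrangement m (V.erase (m + 1)) := by
  refine ⟨h.1.erase _, fun x hx => ?_⟩
  have hx' := (h.1.mem_erase_iff).1 hx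
  have := h.2 x hx'.2
  omega

theorem card_filter_succ_mem (h : IsArrangement n V) :
    #{x : Fin n | (x : ℕ) + 1 ∈ V} = V.length := by
  rw [← List.toFinset_card_of_nodup h.1]
  refine card_nbij (fun x => (x : ℕ) + 1) (fun x hx => by simpa using hx)
    (fun x _ y _ hxy => Fin.ext (by simpa using hxy)) fun y hy => ?_
  have hy := List.mem_toFinset.1 hy
  have := h.2 y hy
  exact ⟨⟨y - 1, by omega⟩, by simp [Nat.sub_add_cancel this.1, hy], by simp; omega⟩

end IsArrangement

theorem isArrangement_succ_iff_of_notMem {m : ℕ} {V : List ℕ} (hV : m + 1 ∉ V) :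
    IsArrangement (m + 1) V ↔ IsArrangement m V := by
  refine and_congr_right fun _ => forall₂_congr fun x hx => ?_
  have : x ≠ m + 1 := by rintro rfl; exact hV hx
  omega

theorem arrangements_zero_right (n : ℕ) : arrangements n 0 = {[]} := by
  ext V
  simp only [mem_arrangements, List.length_eq_zero_iff, Finset.mem_singleton,
    and_iff_right_iff_imp]
  rintro rfl
  simp [IsArrangement]

theorem arrangements_eq_empty {n l : ℕ} (h : n < l) : arrangements n l = ∅ :=
  eq_empty_of_forall_notMem fun _ hV =>
    (mem_arrangements.1 hV).1.length_le.not_gt ((mem_arrangements.1 hV).2 ▸ h)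

theorem sum_arrangements_succ {M : Type*} [AddCommMonoid M] (f : List ℕ → M) (m l : ℕ) :
    ∑ V ∈ arrangements (m + 1) (l + 1), f V =
      ∑ V ∈ arrangements m (l + 1), f V +
        ∑ t ∈ range (l + 1), ∑ W ∈ arrangements m l, f (W.insertIdx t (m + 1)) := by
  rw [← sum_filter_not_add_sum_filter _ (fun V => m + 1 ∈ V), ← sum_product']
  congr 1
  · refine sum_congr (ext fun V => ?_) fun _ _ => rfl
    rw [mem_filter, mem_arrangements, mem_arrangements]
    constructor
    · rintro ⟨⟨hV, hl⟩, hx⟩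
      exact ⟨(isArrangement_succ_iff_of_notMem hx).1 hV, hl⟩
    · rintro ⟨hV, hl⟩
      exact ⟨⟨(isArrangement_succ_iff_of_notMem hV.succ_notMem).2 hV, hl⟩, hV.succ_notMem⟩
  · refine sum_nbij' (fun V => (V.idxOf (m + 1), V.erase (m + 1)))
      (fun p => p.2.insertIdx p.1 (m + 1)) ?_ ?_ ?_ ?_ ?_
    · intro V hV
      simp only [mem_filter, mem_arrangements] at hV
      obtain ⟨⟨hV, hl⟩, hx⟩ := hV
      have := List.idxOf_lt_length_of_mem hx
      simp only [mem_product, mem_range, mem_arrangements]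
      refine ⟨by omega, hV.erase_succ, ?_⟩
      rw [List.length_erase_of_mem hx]
      omega
    · rintro ⟨t, W⟩ hp
      simp only [mem_product, mem_range, mem_arrangements] at hp
      obtain ⟨ht, hW, rfl⟩ := hp
      simp only [mem_filter, mem_arrangements]
      exact ⟨⟨hW.insertIdx_succ (by omega), List.length_insertIdx_of_le_length (by omega) _⟩,
        (List.mem_insertIdx (by omega)).2 (Or.inl rfl)⟩
    · intro V hV
      exact List.insertIdx_idxOf_erase (mem_filter.1 hV).2
    · rintro ⟨t, W⟩ hp
      simp only [mem_product, mem_range, mem_arrangements] at hp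
      obtain ⟨ht, hW, rfl⟩ := hp
      have ht' : t ≤ W.length := by omega
      simp [List.idxOf_insertIdx_self hW.succ_notMem ht',
        List.erase_insertIdx_of_notMem hW.succ_notMem ht']
    · intro V hV
      rw [List.insertIdx_idxOf_erase (mem_filter.1 hV).2]

def IsBackstepIn (i : ℕ) (V : List ℕ) : Prop :=
  i ∈ V ∧ (i + 1 ∉ V ∨ V.idxOf (i + 1) < V.idxOf i)

instance : ∀ i V, Decidable (IsBackstepIn i V) := fun _ _ => inferInstanceAs (Decidable (_ ∧ _))

/-- The inverse major index of the permutation of `{1,…,n}` that lists the letters missing from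
`V` in increasing order and then `V` (see `imajList_filter_append`). -/
def arrImaj (n : ℕ) (V : List ℕ) : ℕ :=
  ∑ i ∈ Icc 1 (n - 1), if IsBackstepIn i V then i else 0

theorem arrImaj_nil (n : ℕ) : arrImaj n [] = 0 :=
  sum_eq_zero fun _ _ => if_neg fun h => List.not_mem_nil h.1

theorem arrImaj_succ (m : ℕ) (V : List ℕ) :
    arrImaj (m + 1) V = arrImaj m V + if IsBackstepIn m V then m else 0 := by
  cases m with
  | zero => simp [arrImaj]
  | succ m => exact sum_Icc_succ_top (by omega) _

theorem isBackstepIn_insertIdx_iff {i x t : ℕ} {W : List ℕ} (hi : i ≠ x) (hi' : i + 1 ≠ x)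
    (ht : t ≤ W.length) : IsBackstepIn i (W.insertIdx t x) ↔ IsBackstepIn i W := by
  simp only [IsBackstepIn, List.mem_insertIdx ht, hi, hi', false_or,
    List.idxOf_insertIdx_lt_iff hi' hi ht]

theorem isBackstepIn_insertIdx_succ {m t : ℕ} {W : List ℕ} (hx : m + 1 ∉ W)
    (ht : t ≤ W.length) :
    IsBackstepIn m (W.insertIdx t (m + 1)) ↔ m ∈ W ∧ t ≤ W.idxOf m := by
  simp only [IsBackstepIn, List.mem_insertIdx ht, true_or, not_true, false_or,
    List.idxOf_insertIdx_self hx ht, List.idxOf_insertIdx_of_ne (Nat.ne_add_one m) ht,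
    Nat.ne_add_one m]
  refine and_congr_right fun _ => ?_
  split_ifs <;> omega

theorem arrImaj_insertIdx_succ {m t : ℕ} {W : List ℕ} (hx : m + 1 ∉ W) (ht : t ≤ W.length) :
    arrImaj (m + 1) (W.insertIdx t (m + 1)) =
      arrImaj m W + if m ∈ W ∧ t ≤ W.idxOf m then m else 0 := by
  simp only [arrImaj_succ, isBackstepIn_insertIdx_succ hx ht, add_left_inj]
  refine sum_congr rfl fun i hi => ?_
  have := mem_Icc.1 hi
  simp only [isBackstepIn_insertIdx_iff (show i ≠ m + 1 by omega) (show i + 1 ≠ m + 1 by omega)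
    ht]

theorem arrImaj_succ_of_notMem {m : ℕ} {W : List ℕ} (hx : m + 1 ∉ W) :
    arrImaj (m + 1) W = arrImaj m W + if m ∈ W then m else 0 := by
  simp [arrImaj_succ, IsBackstepIn, hx]

/-- In `C ++ V` with `C` increasing, `i + 1` precedes `i` exactly when `i ∈ V` and either
`i + 1 ∈ C` or `i + 1` precedes `i` within `V`. -/
theorem imajList_filter_append (n : ℕ) (V : List ℕ) :
    imajList n ((List.range' 1 n).filter (· ∉ V) ++ V) = arrImaj n V := by
  set C := (List.range' 1 n).filter (· ∉ V)
  have hC : C.SortedLT := ((List.pairwise_lt_range' (s := 1) (n := n)).filter _).sortedLT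
  have hmemC : ∀ x, 1 ≤ x → x ≤ n → (x ∈ C ↔ x ∉ V) := fun x h1 h2 => by
    simp only [C, List.mem_filter, List.mem_range'_1, decide_eq_true_eq]
    exact ⟨And.right, fun h => ⟨by omega, h⟩⟩
  refine sum_congr rfl fun i hi => ?_
  have hi := mem_Icc.1 hi
  have hi0 := hmemC i (by omega) (by omega)
  have hi1 := hmemC (i + 1) (by omega) (by omega)
  simp only [List.idxOf_append, hi0, hi1]
  by_cases h : i ∈ V <;> by_cases h' : i + 1 ∈ V
  · simp [IsBackstepIn, h, h']
  · have := List.idxOf_lt_length_of_mem (hi1.2 h')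
    simp [IsBackstepIn, h, h']
    omega
  · have := List.idxOf_lt_length_of_mem (hi0.2 h)
    simp [IsBackstepIn, h, h']
    omega
  · have := (hC.idxOf_lt_idxOf_iff (hi0.2 h) (hi1.2 h')).2 (Nat.lt_succ_self i)
    simp [IsBackstepIn, h, h']
    omega

theorem imajList_waList_waWord {n r : ℕ} (a : Fin r → Fin n) :
    imajList n (waList n (waWord a)) = arrImaj n (waWord a).dedup := by
  rw [waList, List.foldl_erase_append_singleton List.nodup_range', imajList_filter_append]

section GeneratingFunction

variable {R : Type*} [CommRing R] (q : R)

/-- The generating function of `arrImaj (m + 1)` over the arrangements of `{1,…,m+1}` of length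
`l + 1` in which `m + 1` sits at position `t`. -/
def insertTopGF (m l t : ℕ) : R :=
  ∑ W ∈ arrangements m l, q ^ arrImaj (m + 1) (W.insertIdx t (m + 1))

theorem insertTopGF_zero_zero (m : ℕ) : insertTopGF q m 0 0 = 1 := by
  rw [insertTopGF, arrangements_zero_right, sum_singleton,
    arrImaj_insertIdx_succ List.not_mem_nil (Nat.zero_le _), arrImaj_nil]
  simp

theorem insertTopGF_zero_succ (l t : ℕ) : insertTopGF q 0 (l + 1) t = 0 := by
  rw [insertTopGF, arrangements_eq_empty (Nat.succ_pos l), sum_empty]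

/-- Classify the arrangements `W` of `{1,…,m+1}` by the position `s` of `m + 1`: inserting `m + 2`
at position `t` adds `m + 1` to `arrImaj` exactly when `t ≤ s`, and an arrangement avoiding
`m + 1` contributes as if `m + 1` were put in front. -/
theorem insertTopGF_succ (m l t : ℕ) (ht : t ≤ l + 1) :
    insertTopGF q (m + 1) (l + 1) t =
      insertTopGF q m (l + 1) 0 +
        ∑ s ∈ range (l + 1), (if t ≤ s then q ^ (m + 1) else 1) * insertTopGF q m l s := by
  have hsplit : ∀ W ∈ arrangements (m + 1) (l + 1),
      q ^ arrImaj (m + 2) (W.insertIdx t (m + 2)) =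
        q ^ arrImaj (m + 1) W *
          if m + 1 ∈ W ∧ t ≤ W.idxOf (m + 1) then q ^ (m + 1) else 1 := by
    intro W hW
    obtain ⟨hW, hl⟩ := mem_arrangements.1 hW
    rw [arrImaj_insertIdx_succ hW.succ_notMem (hl ▸ ht), pow_add, apply_ite (q ^ ·), pow_zero]
  have hfree : ∀ W ∈ arrangements m (l + 1),
      q ^ arrImaj (m + 1) W * (if m + 1 ∈ W ∧ t ≤ W.idxOf (m + 1) then q ^ (m + 1) else 1) =
        q ^ arrImaj (m + 1) (W.insertIdx 0 (m + 1)) := by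
    intro W hW
    have hx := (mem_arrangements.1 hW).1.succ_notMem
    rw [arrImaj_succ_of_notMem hx, arrImaj_insertIdx_succ hx (Nat.zero_le _)]
    simp [hx]
  have hins : ∀ s ∈ range (l + 1), ∀ U ∈ arrangements m l,
      q ^ arrImaj (m + 1) (U.insertIdx s (m + 1)) *
          (if m + 1 ∈ U.insertIdx s (m + 1) ∧ t ≤ (U.insertIdx s (m + 1)).idxOf (m + 1)
            then q ^ (m + 1) else 1) =
        (if t ≤ s then q ^ (m + 1) else 1) * q ^ arrImaj (m + 1) (U.insertIdx s (m + 1)) := by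
    intro s hs U hU
    obtain ⟨hU, hl⟩ := mem_arrangements.1 hU
    have hs : s ≤ U.length := hl ▸ Nat.lt_succ_iff.1 (mem_range.1 hs)
    rw [mul_comm, List.idxOf_insertIdx_self hU.succ_notMem hs]
    simp [List.mem_insertIdx hs]
  rw [insertTopGF, sum_congr rfl hsplit, sum_arrangements_succ, sum_congr rfl hfree,
    sum_congr rfl fun s hs => sum_congr rfl (hins s hs)]
  simp only [insertTopGF, mul_sum]

theorem insertTopGF_eq (m : ℕ) :
    ∀ l t, t ≤ l → insertTopGF q m l t = q ^ (l - t) * qDescFactorial q m l := by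
  induction m with
  | zero =>
    rintro (_ | l) t ht
    · obtain rfl : t = 0 := by omega
      simp [insertTopGF_zero_zero]
    · rw [insertTopGF_zero_succ, qDescFactorial_eq_zero_of_lt q (Nat.succ_pos l), mul_zero]
  | succ m ih =>
    rintro (_ | l) t ht
    · obtain rfl : t = 0 := by omega
      simp [insertTopGF_zero_zero]
    have hgeom := sum_range_ite_mul_pow q (q ^ (m + 1)) t (l + 1 - t)
    rw [show t + (l + 1 - t) = l + 1 by omega, Nat.add_sub_cancel] at hgeom
    rw [insertTopGF_succ q m l t ht, ih _ 0 (Nat.zero_le _), Nat.sub_zero,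
      sum_congr rfl fun s hs => by rw [ih l s (Nat.lt_succ_iff.1 (mem_range.1 hs))],
      ← qDescFactorial_recursion q ht, ← hgeom, sum_mul]
    exact congrArg _ (sum_congr rfl fun s _ => by ring)

theorem sum_pow_arrImaj (n l : ℕ) :
    ∑ V ∈ arrangements n l, q ^ arrImaj n V = qDescFactorial q n l := by
  rw [← one_mul (qDescFactorial q n l), ← pow_zero q, ← Nat.sub_self l,
    ← insertTopGF_eq q n l l le_rfl, insertTopGF]
  refine sum_congr rfl fun V hV => ?_
  obtain ⟨hVn, rfl⟩ := mem_arrangements.1 hV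
  rw [arrImaj_insertIdx_succ hVn.succ_notMem le_rfl,
    if_neg fun h => (List.idxOf_lt_length_of_mem h.1).not_ge h.2, add_zero]

end GeneratingFunction

theorem card_filter_fin_cons {α : Type*} [Fintype α] {r : ℕ} (P : (Fin (r + 1) → α) → Prop)
    [DecidablePred P] : #{a | P a} = ∑ x, #{a : Fin r → α | P (Fin.cons x a)} := by
  simp only [card_filter]
  rw [← (Fin.consEquiv fun _ => α).sum_comp, Fintype.sum_prod_type]
  rfl

theorem waWord_cons {n r : ℕ} (x : Fin n) (a : Fin r → Fin n) :
    waWord (Fin.cons x a : Fin (r + 1) → Fin n) = ((x : ℕ) + 1) :: waWord a := by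
  simp [waWord, List.ofFn_succ]

/-- Prepending a letter `x` to a sequence either keeps its `dedup` (when `x` is one of its
letters) or prepends `x` to it; this gives the recursion of `stirling`. -/
theorem card_dedup_waWord_eq {n : ℕ} (r : ℕ) {V : List ℕ} (hV : IsArrangement n V) :
    #{a : Fin r → Fin n | (waWord a).dedup = V} = stirling r V.length := by
  induction r generalizing V with
  | zero =>
    have hnil : ∀ a : Fin 0 → Fin n, waWord a = [] := fun a => by simp [waWord]
    cases V <;> simp [hnil, stirling, eq_comm]
  | succ r ih =>
    have hcount : ∀ x : Fin n,
        #{a : Fin r → Fin n | ((x : ℕ) + 1 ∈ V ∧ (waWord a).dedup = V) ∨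
            V = ((x : ℕ) + 1) :: (waWord a).dedup} =
          (if (x : ℕ) + 1 ∈ V then 1 else 0) * stirling r V.length +
            #{a : Fin r → Fin n | V = ((x : ℕ) + 1) :: (waWord a).dedup} := by
      intro x
      rw [filter_or, card_union_of_disjoint (disjoint_filter.2 fun a _ h h' => ?_)]
      · split_ifs with hx <;> simp [hx, ih hV]
      · have := congrArg List.length (h.2.trans h')
        simp at this
    rw [card_filter_fin_cons]
    simp only [waWord_cons, List.dedup_cons_eq_iff hV.1, hcount, sum_add_distrib, ← sum_mul,
      sum_boole, Nat.cast_id, hV.card_filter_succ_mem]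
    cases V with
    | nil => simp [stirling]
    | cons y W =>
      have hW : IsArrangement n W :=
        ⟨(List.nodup_cons.1 hV.1).2, fun x hx => hV.2 x (List.mem_cons_of_mem y hx)⟩
      have hy : IsArrangement n [y] :=
        ⟨List.nodup_singleton y, fun x hx => hV.2 x (by simp_all)⟩
      have hcons : ∀ x : Fin n,
          #{a : Fin r → Fin n | y :: W = ((x : ℕ) + 1) :: (waWord a).dedup} =
            (if (x : ℕ) + 1 ∈ [y] then 1 else 0) * stirling r W.length := by
        intro x
        by_cases hx : (x : ℕ) + 1 = y
        · rw [← ih hW]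
          simp [hx, eq_comm]
        · simp [hx, Ne.symm hx]
      simp only [hcons, ← sum_mul, sum_boole, Nat.cast_id, hy.card_filter_succ_mem]
      simp [stirling]

theorem sum_dedup_waWord {M : Type*} [AddCommMonoid M] (n r : ℕ) (f : List ℕ → M) :
    ∑ a : Fin r → Fin n, f (waWord a).dedup =
      ∑ l ∈ range (n + 1), stirling r l • ∑ V ∈ arrangements n l, f V := by
  have hmaps : ∀ a ∈ (univ : Finset (Fin r → Fin n)),
      (waWord a).dedup ∈ (range (n + 1)).biUnion (arrangements n) := by
    intro a _
    have hV : IsArrangement n (waWord a).dedup := ⟨List.nodup_dedup _, fun x hx => by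
      obtain ⟨i, rfl⟩ := List.mem_ofFn.1 (List.mem_dedup.1 hx)
      omega⟩
    exact mem_biUnion.2
      ⟨_, mem_range.2 (Nat.lt_succ_of_le hV.length_le), mem_arrangements.2 ⟨hV, rfl⟩⟩
  have hdisj : (range (n + 1) : Set ℕ).PairwiseDisjoint (arrangements n) :=
    fun l _ l' _ hll' => disjoint_left.2 fun V hV hV' =>
      hll' ((mem_arrangements.1 hV).2.symm.trans (mem_arrangements.1 hV').2)
  rw [← sum_fiberwise_of_maps_to hmaps, sum_biUnion hdisj]
  refine sum_congr rfl fun l _ => ?_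
  rw [smul_sum]
  refine sum_congr rfl fun V hV => ?_
  obtain ⟨hVn, rfl⟩ := mem_arrangements.1 hV
  rw [sum_congr rfl fun a ha => congrArg f (mem_filter.1 ha).2, sum_const,
    card_dedup_waWord_eq r hVn]

theorem stmt0_general {R : Type*} [CommRing R] (q : R) (n r : ℕ) (hr : 0 < r) :
    ∑ a : Fin r → Fin n, q ^ imajList n (waList n (waWord a)) =
      ∑ l ∈ Finset.Icc 1 n, (stirling r l : R) * ∏ j ∈ Finset.range l, qint q (n - j) := by
  simp only [imajList_waList_waWord, sum_dedup_waWord n r (fun V => q ^ arrImaj n V),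
    sum_pow_arrImaj, nsmul_eq_mul]
  obtain ⟨r, rfl⟩ := Nat.exists_eq_add_of_lt hr
  rw [range_eq_Ico, sum_eq_sum_Ico_succ_bot (Nat.succ_pos n)]
  simp [stirling, qDescFactorial, Ico_add_one_right_eq_Icc]

/-- `Σ_{a ∈ {1,...,n}^r} q^{imaj(w_a)} = Σ_{l=1}^n S(r,l)[n][n-1]···[n-l+1]`. -/
theorem stmt0 {R : Type*} [CommRing R] (q : R) (n r : ℕ) (hn : 0 < n) (hr : 0 < r) :
    ∑ a : Fin r → Fin n, q ^ imajList n (waList n (waWord a)) =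
      ∑ l ∈ Finset.Icc 1 n, (stirling r l : R) * ∏ j ∈ Finset.range l, qint q (n - j) :=
  stmt0_general q n r hr
end

section
/- The map sending a sequence a in {1,...,n}^r to the pair (shape(a), w_a) is a bijection from {1,...,n}^r onto the set of pairs (K, w) where K is a set partition of {1,...,r} with some number l ≤ min(n,r) of blocks and w is a permutation in D_{n,n-l}. -/
open Finset

/-!
`waList n l` is the increasing list of the values of `1, …, n` missing from `l`, followed by
`l.dedup`, the values of `l` listed by their last occurrences. So `w_a` consists of forced
increasing entries followed by the labels that `a` gives to the blocks of its shape.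

Two sequences of the same shape differ by a relabelling `φ` of values, injective on the values
taken; if moreover their `dedup`s agree, `φ` fixes every value taken, so the sequences coincide.
Conversely a set partition is the shape of the map sending `i` to its block, and relabelling the
blocks by the last `l` entries of `w` produces a preimage of `(K, w)`.
-/

namespace List
variable {α β : Type*} [DecidableEq α]

theorem foldl_erase_append {l L : List α} (hL : L.Nodup) :
    l.foldl (fun acc x => acc.erase x ++ [x]) L = L.filter (· ∉ l) ++ l.dedup := by
  induction l generalizing L with
  | nil => simp
  | cons x l ih =>
    have hL' : (L.erase x ++ [x]).Nodup :=
      (hL.erase x).append (nodup_singleton x) (by simp [hL.mem_erase_iff])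
    have hfilter : (L.filter fun y => decide (y ∉ l) && y != x) = L.filter (· ∉ x :: l) :=
      filter_congr fun y _ => by by_cases y = x <;> simp [*]
    rw [foldl_cons, ih hL', filter_append, hL.erase_eq_filter, filter_filter, hfilter]
    by_cases hx : x ∈ l
    · simp [hx, dedup_cons_of_mem hx]
    · simp [hx, dedup_cons_of_notMem hx]

theorem filter_notMem_append_perm {d L : List α} (hd : d.Nodup) (hL : L.Nodup) (hdL : d ⊆ L) :
    L.filter (· ∉ d) ++ d ~ L := by
  have hmem : L.filter (· ∈ d) ~ d :=
    (perm_ext_iff_of_nodup (hL.filter _) hd).2 fun x => by simpa using fun h => hdL h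
  refine perm_append_comm.trans ((hmem.symm.append_right _).trans ?_)
  simpa using filter_append_perm (· ∈ d) L

theorem dedup_map_of_injOn [DecidableEq β] {f : α → β} {l : List α}
    (hf : Set.InjOn f {x | x ∈ l}) : (l.map f).dedup = l.dedup.map f := by
  induction l with
  | nil => simp
  | cons x l ih =>
    have hf' : Set.InjOn f {x | x ∈ l} := hf.mono fun y hy => mem_cons_of_mem x hy
    have hmem : f x ∈ l.map f ↔ x ∈ l := by
      refine ⟨fun h => ?_, mem_map_of_mem⟩
      obtain ⟨y, hy, hxy⟩ := mem_map.1 h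
      rwa [← hf (mem_cons_of_mem x hy) mem_cons_self hxy]
    by_cases hx : x ∈ l
    · rw [map_cons, dedup_cons_of_mem (hmem.2 hx), dedup_cons_of_mem hx, ih hf']
    · rw [map_cons, dedup_cons_of_notMem (hmem.not.2 hx), dedup_cons_of_notMem hx, ih hf',
        map_cons]

theorem map_getD_idxOf {d : List α} {e : List β} (hd : d.Nodup) (hl : e.length = d.length)
    (b : β) : d.map (fun x => e.getD (d.idxOf x) b) = e := by
  refine ext_getElem (by simp [hl]) fun k hk _ => ?_
  simp only [getElem_map, hd.idxOf_getElem]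
  exact getD_eq_getElem _ _ _

theorem injOn_getD_idxOf {d : List α} {e : List β} (he : e.Nodup) (hl : e.length = d.length)
    (b : β) : Set.InjOn (fun x => e.getD (d.idxOf x) b) {x | x ∈ d} := by
  intro x hx y hy hxy
  have hx' : d.idxOf x < e.length := hl ▸ idxOf_lt_length_iff.2 hx
  have hy' : d.idxOf y < e.length := hl ▸ idxOf_lt_length_iff.2 hy
  simp only [getD_eq_getElem _ _ hx', getD_eq_getElem _ _ hy', he.getElem_inj_iff] at hxy
  exact (idxOf_inj hx).1 hxy

theorem filter_notMem_drop_eq_take [LinearOrder α] {L w : List α} (hL : L.Pairwise (· < ·))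
    (hw : w ~ L) (k : ℕ) (hk : (w.take k).Pairwise (· < ·)) :
    L.filter (· ∉ w.drop k) = w.take k := by
  have hnd : (w.take k ++ w.drop k).Nodup := by
    rw [take_append_drop]; exact hw.nodup_iff.2 hL.nodup
  refine (hL.filter _).eq_of_mem_iff hk fun x => ?_
  have hsplit : x ∈ w ↔ x ∈ w.take k ∨ x ∈ w.drop k := by rw [← mem_append, take_append_drop]
  rw [mem_filter, ← hw.mem_iff, hsplit, decide_eq_true_iff]
  have hdisj := disjoint_of_nodup_append hnd
  exact ⟨fun ⟨h, h'⟩ => h.resolve_right h', fun h => ⟨Or.inl h, hdisj h⟩⟩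

end List

section Shape
variable {r : ℕ} {α β : Type*} [DecidableEq α] [DecidableEq β]

theorem mem_shapeFn {f : Fin r → α} {B : Finset (Fin r)} :
    B ∈ shapeFn f ↔ ∃ i, B = univ.filter (f · = f i) := by
  simp [shapeFn, eq_comm]

theorem shapeFn_eq_iff {f : Fin r → α} {g : Fin r → β} :
    shapeFn f = shapeFn g ↔ ∀ i j, f i = f j ↔ g i = g j := by
  constructor
  · intro h i j
    obtain ⟨k, hk⟩ := mem_shapeFn.1 (h ▸ mem_shapeFn.2 ⟨j, rfl⟩)
    have hjk : g j = g k := by simpa using hk.le (mem_filter.2 ⟨mem_univ j, rfl⟩)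
    simpa [hjk] using congrArg (i ∈ ·) hk
  · intro h
    ext B
    simp only [mem_shapeFn, h]

theorem isSetPartition_shapeFn (f : Fin r → α) : isSetPartition (shapeFn f) := by
  refine ⟨fun B hB => ?_,
    fun i => ⟨univ.filter (f · = f i), ⟨mem_shapeFn.2 ⟨i, rfl⟩, by simp⟩, ?_⟩⟩
  · obtain ⟨i, rfl⟩ := mem_shapeFn.1 hB
    exact ⟨i, by simp⟩
  · rintro B ⟨hB, hiB⟩
    obtain ⟨j, rfl⟩ := mem_shapeFn.1 hB
    ext k
    simp_all

theorem card_shapeFn (f : Fin r → α) : (shapeFn f).card = (List.ofFn f).dedup.length := by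
  have himage : (List.ofFn f).toFinset = univ.image f := by
    ext x
    simp [List.mem_ofFn, eq_comm]
  rw [← List.card_toFinset, himage, shapeFn, card_image_of_injOn]
  intro x hx y hy hxy
  obtain ⟨i, -, rfl⟩ := mem_image.1 hx
  obtain ⟨j, -, rfl⟩ := mem_image.1 hy
  simpa using congrArg (i ∈ ·) hxy

theorem exists_shapeFn_eq {K : Finset (Finset (Fin r))} (hK : isSetPartition K) :
    ∃ f : Fin r → Finset (Fin r), shapeFn f = K := by
  choose f hf hunique using hK.2
  have hblock : ∀ i j, j ∈ f i ↔ f j = f i := fun i j =>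
    ⟨fun h => (hunique j _ ⟨(hf i).1, h⟩).symm, fun h => h ▸ (hf j).2⟩
  refine ⟨f, ext fun B => ⟨fun hB => ?_, fun hB => ?_⟩⟩
  · obtain ⟨i, rfl⟩ := mem_shapeFn.1 hB
    simpa [← hblock] using (hf i).1
  · obtain ⟨i, hi⟩ := hK.1 B hB
    refine mem_shapeFn.2 ⟨i, ?_⟩
    rw [hunique i B ⟨hB, hi⟩]
    ext j
    simp [hblock]

theorem eq_of_shapeFn_eq_of_dedup_eq {f g : Fin r → α} (hs : shapeFn f = shapeFn g)
    (hd : (List.ofFn f).dedup = (List.ofFn g).dedup) : f = g := by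
  have hpat := shapeFn_eq_iff.1 hs
  set φ := Function.extend f g id
  have hφ (i : Fin r) : φ (f i) = g i :=
    Function.FactorsThrough.extend_apply (fun i j h => (hpat i j).1 h) _ i
  have hinj : Set.InjOn φ {x | x ∈ List.ofFn f} := by
    rintro _ hx _ hy hxy
    obtain ⟨i, rfl⟩ := List.mem_ofFn.1 hx
    obtain ⟨j, rfl⟩ := List.mem_ofFn.1 hy
    rw [hφ, hφ] at hxy
    exact (hpat i j).2 hxy
  have hmap : (List.ofFn f).dedup.map φ = (List.ofFn f).dedup.map id := by
    rw [← List.dedup_map_of_injOn hinj, List.map_ofFn, show φ ∘ f = g from funext hφ, hd,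
      List.map_id]
  have hfix := List.map_inj_left.1 hmap
  funext i
  rw [← hφ, hfix (f i) (List.mem_dedup.2 (List.mem_ofFn.2 ⟨i, rfl⟩)), id]

theorem exists_shapeFn_eq_and_dedup_eq [Inhabited β] (f : Fin r → α) {e : List β}
    (he : e.Nodup) (hl : e.length = (List.ofFn f).dedup.length) :
    ∃ g : Fin r → β, shapeFn g = shapeFn f ∧ (List.ofFn g).dedup = e := by
  set d := (List.ofFn f).dedup
  set φ : α → β := fun x => e.getD (d.idxOf x) default
  have hinj : Set.InjOn φ {x | x ∈ List.ofFn f} :=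
    (List.injOn_getD_idxOf he hl default).mono fun x hx => List.mem_dedup.2 hx
  refine ⟨φ ∘ f, shapeFn_eq_iff.2 fun i j => hinj.eq_iff ?_ ?_, ?_⟩
  · exact List.mem_ofFn.2 ⟨i, rfl⟩
  · exact List.mem_ofFn.2 ⟨j, rfl⟩
  · rw [← List.map_ofFn, List.dedup_map_of_injOn hinj]
    exact List.map_getD_idxOf (List.nodup_dedup _) hl default

end Shape

section Word
variable {n r : ℕ}

theorem waList_eq (l : List ℕ) :
    waList n l = (List.range' 1 n).filter (· ∉ l.dedup) ++ l.dedup := by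
  simpa only [waList, List.mem_dedup] using List.foldl_erase_append (l := l) List.nodup_range'

theorem shapeFn_succ (a : Fin r → Fin n) : shapeFn (fun i => (a i : ℕ) + 1) = shapeFn a :=
  shapeFn_eq_iff.2 fun i j => by simp [Fin.ext_iff]

theorem dedup_waWord_subset_range' (a : Fin r → Fin n) : (waWord a).dedup ⊆ List.range' 1 n := by
  intro x hx
  obtain ⟨i, rfl⟩ := List.mem_ofFn.1 (List.mem_dedup.1 hx)
  have := (a i).isLt
  simp only [List.mem_range'_1]
  omega

theorem card_shapeFn_eq_length_dedup (a : Fin r → Fin n) :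
    (shapeFn a).card = (waWord a).dedup.length := by
  rw [← shapeFn_succ, card_shapeFn]
  rfl

theorem length_filter_waWord (a : Fin r → Fin n) :
    ((List.range' 1 n).filter (· ∉ (waWord a).dedup)).length = n - (shapeFn a).card := by
  have h := (List.filter_notMem_append_perm (List.nodup_dedup _) List.nodup_range'
    (dedup_waWord_subset_range' a)).length_eq
  rw [card_shapeFn_eq_length_dedup]
  simp only [List.length_append, List.length_range'] at h
  exact Nat.eq_sub_of_add_eq h

theorem take_waList (a : Fin r → Fin n) :
    (waList n (waWord a)).take (n - (shapeFn a).card)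
      = (List.range' 1 n).filter (· ∉ (waWord a).dedup) := by
  rw [waList_eq, List.take_left' (length_filter_waWord a)]

theorem drop_waList (a : Fin r → Fin n) :
    (waList n (waWord a)).drop (n - (shapeFn a).card) = (waWord a).dedup := by
  rw [waList_eq, List.drop_left' (length_filter_waWord a)]

theorem waList_perm (a : Fin r → Fin n) : (waList n (waWord a)).Perm (List.range' 1 n) := by
  rw [waList_eq]
  exact List.filter_notMem_append_perm (List.nodup_dedup _) List.nodup_range'
    (dedup_waWord_subset_range' a)

theorem card_shapeFn_le (a : Fin r → Fin n) : (shapeFn a).card ≤ min n r := by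
  rw [card_shapeFn_eq_length_dedup]
  refine le_min ?_ ?_
  · simpa using
      (List.subperm_of_subset (List.nodup_dedup _) (dedup_waWord_subset_range' a)).length_le
  · simpa [waWord] using (List.dedup_sublist (waWord a)).length_le

theorem eq_of_shapeFn_eq_of_waList_eq {a b : Fin r → Fin n} (hs : shapeFn a = shapeFn b)
    (hw : waList n (waWord a) = waList n (waWord b)) : a = b := by
  have hd : (waWord a).dedup = (waWord b).dedup := by
    rw [← drop_waList, ← drop_waList, hs, hw]
  have h := eq_of_shapeFn_eq_of_dedup_eq (by rwa [shapeFn_succ, shapeFn_succ]) hd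
  funext i
  exact Fin.ext (by simpa using congrFun h i)

theorem exists_shapeFn_eq_and_waList_eq {K : Finset (Finset (Fin r))} {w : List ℕ}
    (hK : isSetPartition K) (hcard : K.card ≤ n) (hperm : w.Perm (List.range' 1 n))
    (hsort : (w.take (n - K.card)).Pairwise (· < ·)) :
    ∃ a : Fin r → Fin n, shapeFn a = K ∧ waList n (waWord a) = w := by
  obtain ⟨f, rfl⟩ := exists_shapeFn_eq hK
  have hnd : w.Nodup := hperm.nodup_iff.2 List.nodup_range'
  obtain ⟨g, hgf, hge⟩ := exists_shapeFn_eq_and_dedup_eq f (e := w.drop (n - (shapeFn f).card))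
    (hnd.sublist (List.drop_sublist _ _))
    (by rw [List.length_drop, hperm.length_eq, List.length_range', ← card_shapeFn]; omega)
  have hg (i : Fin r) : 1 ≤ g i ∧ g i ≤ n := by
    have : g i ∈ w := List.mem_of_mem_drop (hge ▸ List.mem_dedup.2 (List.mem_ofFn.2 ⟨i, rfl⟩))
    have := List.mem_range'_1.1 (hperm.subset this)
    omega
  set a : Fin r → Fin n := fun i => ⟨g i - 1, by have := hg i; omega⟩
  have hsucc : (fun i => (a i : ℕ) + 1) = g := funext fun i => by have := hg i; simp [a]; omega
  refine ⟨a, by rw [← shapeFn_succ, hsucc, hgf], ?_⟩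
  rw [waList_eq, show waWord a = List.ofFn g from congrArg List.ofFn hsucc, hge,
    List.filter_notMem_drop_eq_take List.pairwise_lt_range' hperm _ hsort, List.take_append_drop]

end Word

theorem stmt6_general (n r : ℕ) :
    Set.BijOn (fun a : Fin r → Fin n => (shapeFn a, waList n (waWord a))) Set.univ
      {p : Finset (Finset (Fin r)) × List ℕ |
        isSetPartition p.1 ∧ p.1.card ≤ min n r ∧
        List.Perm p.2 (List.range' 1 n) ∧
        List.Pairwise (· < ·) (p.2.take (n - p.1.card))} := by
  refine ⟨fun a _ => ⟨isSetPartition_shapeFn a, card_shapeFn_le a, waList_perm a, ?_⟩,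
    fun a _ b _ h => eq_of_shapeFn_eq_of_waList_eq (congrArg Prod.fst h) (congrArg Prod.snd h),
    fun ⟨K, w⟩ ⟨hK, hcard, hperm, hsort⟩ => ?_⟩
  · rw [take_waList]
    exact List.Pairwise.filter _ List.pairwise_lt_range'
  · obtain ⟨a, rfl, rfl⟩ :=
      exists_shapeFn_eq_and_waList_eq hK (hcard.trans (min_le_left _ _)) hperm hsort
    exact ⟨a, trivial, rfl⟩

/-- `a ↦ (shape(a), w_a)` is a bijection from `{1,...,n}^r` onto pairs `(K, w)`
where `K` is a set partition of `{1,...,r}` with `l ≤ min(n,r)` blocks and `w ∈ D_{n,n-l}`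
(a permutation word of `(1,...,n)` whose first `n - l` entries increase). -/
theorem stmt6 (n r : ℕ) (hn : 0 < n) (hr : 0 < r) :
    Set.BijOn (fun a : Fin r → Fin n => (shapeFn a, waList n (waWord a))) Set.univ
      {p : Finset (Finset (Fin r)) × List ℕ |
        isSetPartition p.1 ∧ p.1.card ≤ min n r ∧
        List.Perm p.2 (List.range' 1 n) ∧
        List.Pairwise (· < ·) (p.2.take (n - p.1.card))} :=
  stmt6_general n r
end

section
/- If a sequence a in {1,...,n}^r has exactly l distinct entries, then the permutation w_a lies in D_{n,n-l}, i.e., the first n-l entries of w_a in one-line notation are increasing. -/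
open Finset

/-!
Reading the word `a` letter by letter, the one-line notation of `w_a` always splits as
`F ++ Q`, where `F` lists the values not yet read, in increasing order, and `Q` is a list of
distinct values already read. Hence `Q` has at most `l` entries, and since the word is a
permutation of `1, …, n`, its first `n - l` entries all lie in the increasing part `F`.
-/

namespace List

variable {α : Type*} [DecidableEq α]

def moveToEnd (l : List α) (x : α) : List α := l.erase x ++ [x]

theorem foldl_moveToEnd_perm {L w : List α} (hw : ∀ x ∈ w, x ∈ L) :
    (w.foldl moveToEnd L).Perm L := by
  induction w generalizing L with
  | nil => exact Perm.refl L
  | cons x w ih =>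
    have hx : (moveToEnd L x).Perm L :=
      perm_append_comm.trans (perm_cons_erase (hw x mem_cons_self)).symm
    exact (ih fun y hy => hx.mem_iff.mpr (hw y (mem_cons_of_mem x hy))).trans hx

theorem foldl_moveToEnd_eq_filter_append {L : List α} (hL : L.Nodup) (w : List α) :
    ∃ Q : List α, Q.Nodup ∧ Q ⊆ w ∧ w.foldl moveToEnd L = L.filter (· ∉ w) ++ Q := by
  induction w using reverseRecOn with
  | nil => exact ⟨[], nodup_nil, nil_subset _, by simp⟩
  | append_singleton w x ih =>
    obtain ⟨Q, hQ, hQw, hfold⟩ := ih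
    set F := L.filter (· ∉ w)
    have hFx : L.filter (· ∉ w ++ [x]) = F.erase x := by
      rw [(hL.filter _).erase_eq_filter, filter_filter]
      congr 1; funext y; by_cases y = x <;> simp [*]
    rw [foldl_append, hfold, foldl_cons, foldl_nil, moveToEnd, hFx]
    by_cases hxF : x ∈ F
    · have hxQ : x ∉ Q := fun hxQ => by simpa [hQw hxQ] using (mem_filter.mp hxF).2
      refine ⟨Q ++ [x], ?_, ?_, ?_⟩
      · simpa using hQ.concat hxQ
      · exact append_subset.mpr ⟨fun y hy => mem_append_left _ (hQw hy), by simp⟩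
      · rw [erase_append_left _ hxF, append_assoc]
    · refine ⟨Q.erase x ++ [x], ?_, ?_, ?_⟩
      · simpa using (hQ.erase x).concat hQ.not_mem_erase
      · exact append_subset.mpr
          ⟨fun y hy => mem_append_left _ (hQw (mem_of_mem_erase hy)), by simp⟩
      · rw [erase_append_right _ hxF, erase_of_not_mem hxF, append_assoc]

end List

open List

theorem waList_eq_foldl_moveToEnd (n : ℕ) (a : List ℕ) :
    waList n a = a.foldl moveToEnd (range' 1 n) := rfl

theorem mem_range'_of_mem_waWord {n r : ℕ} (a : Fin r → Fin n) {x : ℕ} (hx : x ∈ waWord a) :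
    x ∈ range' 1 n := by
  obtain ⟨i, rfl⟩ := mem_ofFn.mp hx
  have := (a i).isLt
  simp only [mem_range'_1]
  omega

theorem card_toFinset_waWord {n r : ℕ} (a : Fin r → Fin n) :
    (waWord a).toFinset.card = (Finset.univ.image a).card := by
  rw [waWord, ← Fin.univ_image_def,
    show (fun i => (a i : ℕ) + 1) = (fun v : Fin n => (v : ℕ) + 1) ∘ a from rfl,
    ← Finset.image_image, Finset.card_image_of_injective _ fun u v huv => Fin.ext (by simpa using huv)]

/-- if `a ∈ {1,...,n}^r` has exactly `l` distinct entries, then the first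
`n - l` entries of the one-line notation of `w_a` are increasing, i.e. `w_a ∈ D_{n,n-l}`. -/
theorem stmt7 (n r : ℕ) (a : Fin r → Fin n) (l : ℕ)
    (hl : (Finset.univ.image a).card = l) :
    List.Pairwise (· < ·) ((waList n (waWord a)).take (n - l)) := by
  obtain ⟨Q, hQ, hQw, hsplit⟩ := foldl_moveToEnd_eq_filter_append nodup_range' (waWord a)
  set F := (range' 1 n).filter (· ∉ waWord a)
  have hperm : (F ++ Q).Perm (range' 1 n) :=
    hsplit ▸ foldl_moveToEnd_perm fun _ => mem_range'_of_mem_waWord a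
  have hQlen : Q.length ≤ l := by
    rw [← toFinset_card_of_nodup hQ, ← hl, ← card_toFinset_waWord]
    exact Finset.card_le_card fun x hx => mem_toFinset.mpr (hQw (mem_toFinset.mp hx))
  have hFlen : n - l ≤ F.length := by
    have := hperm.length_eq
    simp only [length_append, length_range'] at this
    omega
  rw [waList_eq_foldl_moveToEnd, hsplit, take_append_of_le_length hFlen]
  exact ((pairwise_lt_range').sublist filter_sublist).sublist (take_sublist _ _)
end

section
/- The map k ↦ k* sending (k_1,...,k_r) ∈ Z_n^r to its *-height is a surjection onto P_{n×r}, the set of sequences (m_1,...,m_r) in Z_n^r with m_1 = 0 and such that whenever m_j = h > 0 there exists i < j with m_i = h - 1. -/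
open Finset

/-! Proof idea: `k* ≤ k` entrywise, so `k*` stays in `Z_n`. The recursion for `k*` can only
produce an entry `h + 1` if `h` occurred earlier, so `k*` lies in `P_{n×r}`; conversely every
`m ∈ P_{n×r}` satisfies `m_j ≤ max(m_1 + 1, …, m_{j-1} + 1)`, hence `m* = m`. -/

/-- `M` plays the role of the running bound `max (k₁* + 1, …)` of `starAux`: entries up to `M`
are free, while a larger entry `h + 1` needs an earlier entry `h`. -/
def IsRestrictedGrowth (M : ℕ) (L : List ℕ) : Prop :=
  ∀ j h, L.getD j 0 = h + 1 → h < M ∨ ∃ i < j, L.getD i 0 = h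

theorem isRestrictedGrowth_nil (M : ℕ) : IsRestrictedGrowth M [] := by
  intro j h hj
  simp at hj

theorem isRestrictedGrowth_cons {M k : ℕ} {ks : List ℕ} :
    IsRestrictedGrowth M (k :: ks) ↔ k ≤ M ∧ IsRestrictedGrowth (max M (k + 1)) ks := by
  constructor
  · intro hL
    refine ⟨?_, fun j h hj => ?_⟩
    · obtain _ | h := k
      · exact Nat.zero_le M
      · simpa using hL 0 h rfl
    · rcases hL (j + 1) h hj with hM | ⟨_ | i, hi, hih⟩
      · exact .inl (lt_max_of_lt_left hM)
      · exact .inl (lt_max_of_lt_right (by simp at hih; omega))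
      · exact .inr ⟨i, by omega, hih⟩
  · rintro ⟨hk, hks⟩ (_ | j) h hj
    · exact .inl (by simp at hj; omega)
    · rcases hks j h hj with hM | ⟨i, hi, hih⟩
      · by_cases hhM : h < M
        · exact .inl hhM
        · exact .inr ⟨0, j.succ_pos, by simp; omega⟩
      · exact .inr ⟨i + 1, by omega, hih⟩

theorem length_starAux (M : ℕ) (l : List ℕ) : (starAux M l).length = l.length := by
  induction l generalizing M with
  | nil => rfl
  | cons k ks ih => simp [starAux, ih]

theorem getD_starAux_le (M : ℕ) (l : List ℕ) (j : ℕ) :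
    (starAux M l).getD j 0 ≤ l.getD j 0 := by
  induction l generalizing M j with
  | nil => simp [starAux]
  | cons k ks ih =>
    cases j with
    | zero => exact min_le_left k M
    | succ j => exact ih _ j

theorem isRestrictedGrowth_starAux (M : ℕ) (l : List ℕ) :
    IsRestrictedGrowth M (starAux M l) := by
  induction l generalizing M with
  | nil => exact isRestrictedGrowth_nil M
  | cons k ks ih => exact isRestrictedGrowth_cons.2 ⟨min_le_right k M, ih _⟩

theorem starAux_eq_self {M : ℕ} {L : List ℕ} (hL : IsRestrictedGrowth M L) :
    starAux M L = L := by
  induction L generalizing M with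
  | nil => rfl
  | cons k ks ih =>
    obtain ⟨hk, hks⟩ := isRestrictedGrowth_cons.1 hL
    simp only [starAux, min_eq_left hk, ih hks]

theorem getD_ofFn {r : ℕ} (m : Fin r → ℕ) (j : Fin r) : (List.ofFn m).getD j 0 = m j := by
  simp [List.getD_eq_getElem?_getD]

theorem isRestrictedGrowth_ofFn_iff {r : ℕ} (m : Fin r → ℕ) :
    IsRestrictedGrowth 0 (List.ofFn m) ↔
      ∀ (j : Fin r) (h : ℕ), m j = h + 1 → ∃ i < j, m i = h := by
  constructor
  · intro hL j h hj
    obtain hh | ⟨i, hi, hih⟩ := hL j h (by rwa [getD_ofFn])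
    · exact absurd hh h.not_lt_zero
    · exact ⟨⟨i, hi.trans j.isLt⟩, hi, (getD_ofFn m ⟨i, _⟩).symm.trans hih⟩
  · intro hm j h hj
    have hjr : j < r := by
      by_contra hjr
      simp [List.getD_eq_getElem?_getD, hjr] at hj
    obtain ⟨i, hi, hih⟩ := hm ⟨j, hjr⟩ h ((getD_ofFn m ⟨j, hjr⟩).symm.trans hj)
    exact .inr ⟨i, hi, by rwa [getD_ofFn]⟩

theorem ofFn_starFn {n r : ℕ} (k : Fin r → Fin n) :
    List.ofFn (starFn k) = starAux 0 (List.ofFn fun i => (k i : ℕ)) := by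
  apply List.ext_getElem
  · simp [length_starAux]
  · intro j h1 h2
    simp only [List.getElem_ofFn, starFn]
    exact List.getD_eq_getElem _ _ h2

theorem starFn_le {n r : ℕ} (k : Fin r → Fin n) (j : Fin r) : starFn k j ≤ k j :=
  (getD_starAux_le 0 _ j).trans_eq (getD_ofFn _ j)

theorem stmt10_general (n r : ℕ) :
    (fun k : Fin r → Fin n => starFn k) '' Set.univ =
      {m : Fin r → ℕ | (∀ j, m j < n) ∧ (∀ j : Fin r, (j : ℕ) = 0 → m j = 0) ∧
        ∀ (j : Fin r) (h : ℕ), m j = h + 1 → ∃ i, i < j ∧ m i = h} := by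
  ext m
  simp only [Set.image_univ, Set.mem_range, Set.mem_ofPred_eq]
  constructor
  · rintro ⟨k, rfl⟩
    have hgrowth := (isRestrictedGrowth_ofFn_iff (starFn k)).1
      (ofFn_starFn k ▸ isRestrictedGrowth_starAux 0 _)
    refine ⟨fun j => (starFn_le k j).trans_lt (k j).isLt, fun j hj => ?_, hgrowth⟩
    cases hk : starFn k j with
    | zero => rfl
    | succ h =>
      obtain ⟨i, hi, -⟩ := hgrowth j h hk
      exact absurd (Fin.lt_def.1 hi) (by omega)
  · rintro ⟨hlt, -, hgrowth⟩
    refine ⟨fun j => ⟨m j, hlt j⟩, List.ofFn_injective ?_⟩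
    rw [ofFn_starFn]
    exact starAux_eq_self ((isRestrictedGrowth_ofFn_iff m).2 hgrowth)

/-- the ⋆-height map `k ↦ k*` surjects `Z_n^r` onto `P_{n×r}`, the set of
sequences with values in `{0,...,n-1}` starting at `0` such that any value `h+1` is
preceded by the value `h`. -/
theorem stmt10 (n r : ℕ) (hn : 0 < n) :
    (fun k : Fin r → Fin n => starFn k) '' Set.univ =
      {m : Fin r → ℕ | (∀ j, m j < n) ∧ (∀ j : Fin r, (j : ℕ) = 0 → m j = 0) ∧
        ∀ (j : Fin r) (h : ℕ), m j = h + 1 → ∃ i, i < j ∧ m i = h} :=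
  stmt10_general n r
end
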